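/- Let p be a prime, let N ∈ pℤ_p, and let φ ∈ (X,Y)²·ℤ_p[[X,Y]] be divisible in ℤ_p[[X,Y]] by (1+X)^N − (1+Y). Then φ(X,0) ≡ 0 modulo the ideal (p, X^{p+1}) of ℤ_p[[X]]. -/

import Mathlib

/-!
Setting `Y = 0` turns `φ = ((1+X)^N - (1+Y)) ψ` into `φ(X,0) = ((1+X)^N - 1) ψ(X,0)`, and
`φ ∈ (X,Y)²` forces the coefficient of `X` in it, namely `N ψ(0,0)`, to vanish. For `0 < i < p`
the coefficient `C(N,i)` is divisible by `p` since `p ∣ N` and `i!` is a `p`-adic unit; the only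
remaining term of degree `≤ p` is `C(N,p) ψ(0,0)`, which is `0` because `N = 0` or `ψ(0,0) = 0`.
-/

open scoped Classical

noncomputable section

variable (p : ℕ) [Fact p.Prime]

/-- The two-variable power series `(1 + X_i)^N = ∑_k C(N,k) X_i^k` for `N ∈ ℤ_p`. -/
noncomputable def binomSer (i : Fin 2) (N : ℤ_[p]) : MvPowerSeries (Fin 2) ℤ_[p] :=
  fun d => if Finsupp.single i (d i) = d then Ring.choose N (d i) else 0

/-- The specialization `φ(X,0)` of a two-variable power series. -/
noncomputable def specX {R : Type*} [CommRing R] (φ : MvPowerSeries (Fin 2) R) :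
    PowerSeries R :=
  PowerSeries.mk fun k => MvPowerSeries.coeff (R := R) (Finsupp.single 0 k) φ

section Specialization

variable {R : Type*} [CommRing R]

lemma coeff_specX (φ : MvPowerSeries (Fin 2) R) (k : ℕ) :
    PowerSeries.coeff k (specX φ) = MvPowerSeries.coeff (Finsupp.single 0 k) φ :=
  PowerSeries.coeff_mk _ _

lemma specX_mul (a b : MvPowerSeries (Fin 2) R) : specX (a * b) = specX a * specX b := by
  ext k
  simp [coeff_specX, MvPowerSeries.coeff_mul, PowerSeries.coeff_mul, Finset.sum_map]

def specXRingHom : MvPowerSeries (Fin 2) R →+* PowerSeries R where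
  toFun := specX
  map_one' := by
    ext k
    simp [coeff_specX, MvPowerSeries.coeff_one, PowerSeries.coeff_one, Finsupp.single_eq_zero]
  map_mul' := specX_mul
  map_zero' := by ext k; simp [coeff_specX]
  map_add' a b := by ext k; simp [coeff_specX]

lemma specXRingHom_apply (φ : MvPowerSeries (Fin 2) R) : specXRingHom φ = specX φ := rfl

lemma specX_X_zero : specX (MvPowerSeries.X 0 : MvPowerSeries (Fin 2) R) = PowerSeries.X := by
  ext k
  simp [coeff_specX, MvPowerSeries.coeff_X, PowerSeries.coeff_X, Finsupp.single_eq_single_iff]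

lemma specX_X_one : specX (MvPowerSeries.X 1 : MvPowerSeries (Fin 2) R) = 0 := by
  ext k
  simp [coeff_specX, MvPowerSeries.coeff_X, Finsupp.single_eq_single_iff]

lemma specX_X_pow_two_dvd {φ : MvPowerSeries (Fin 2) R}
    (hφ : φ ∈ (Ideal.span {MvPowerSeries.X 0, MvPowerSeries.X 1}) ^ 2) :
    PowerSeries.X ^ 2 ∣ specX φ := by
  have hmap := Ideal.mem_map_of_mem specXRingHom hφ
  rw [Ideal.map_pow, Ideal.map_span, Set.image_pair, specXRingHom_apply, specXRingHom_apply,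
    specX_X_zero, specX_X_one, Ideal.span_pair_comm, Ideal.span_insert_zero,
    Ideal.span_singleton_pow] at hmap
  exact Ideal.mem_span_singleton.mp hmap

end Specialization

lemma specX_binomSer_zero (N : ℤ_[p]) :
    specX (binomSer p 0 N) = PowerSeries.mk (Ring.choose N) := by
  ext k
  simp [coeff_specX, MvPowerSeries.coeff_apply, binomSer]

lemma PowerSeries.mem_span_C_X_pow_of_dvd_coeff {R : Type*} [CommRing R] (a : R) (n : ℕ)
    (f : PowerSeries R) (h : ∀ k ≤ n, a ∣ PowerSeries.coeff k f) :
    f ∈ Ideal.span {PowerSeries.C a, PowerSeries.X ^ (n + 1)} := by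
  choose! c hc using h
  rw [Ideal.mem_span_pair]
  refine ⟨PowerSeries.mk fun k => if k ≤ n then c k else 0,
    PowerSeries.mk fun k => PowerSeries.coeff (k + (n + 1)) f, ?_⟩
  ext k
  rw [map_add, PowerSeries.coeff_mul_C, PowerSeries.coeff_mul_X_pow', PowerSeries.coeff_mk,
    PowerSeries.coeff_mk]
  by_cases hk : k ≤ n
  · rw [if_pos hk, if_neg (by omega), add_zero, mul_comm, hc k hk]
  · rw [if_neg hk, if_pos (by omega), Nat.sub_add_cancel (by omega), zero_mul, zero_add]

lemma PadicInt.p_dvd_natCast_iff (n : ℕ) : (p : ℤ_[p]) ∣ n ↔ p ∣ n := by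
  simpa [Int.natCast_dvd_natCast] using PadicInt.pow_p_dvd_int_iff (p := p) 1 n

lemma PadicInt.p_dvd_choose_of_p_dvd {N : ℤ_[p]} (hN : (p : ℤ_[p]) ∣ N) {k : ℕ} (hk₀ : k ≠ 0)
    (hkp : k < p) : (p : ℤ_[p]) ∣ Ring.choose N k := by
  have hfac : ¬ (p : ℤ_[p]) ∣ (k.factorial : ℕ) := by
    rw [PadicInt.p_dvd_natCast_iff, Nat.Prime.dvd_factorial Fact.out]
    omega
  have hpoch : (p : ℤ_[p]) ∣ (descPochhammer ℤ k).smeval N := by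
    obtain ⟨m, rfl⟩ := Nat.exists_eq_succ_of_ne_zero hk₀
    rw [descPochhammer_succ_left, Polynomial.smeval_mul, Polynomial.smeval_X, pow_one]
    exact hN.mul_right _
  rw [Ring.descPochhammer_eq_factorial_smul_choose, nsmul_eq_mul] at hpoch
  exact (PadicInt.prime_p.dvd_mul.mp hpoch).resolve_left hfac

lemma PowerSeries.coeff_one_mk_choose_sub_one_mul {R : Type*} [CommRing R] [BinomialRing R]
    (N : R) (h : PowerSeries R) :
    PowerSeries.coeff 1 ((PowerSeries.mk (Ring.choose N) - 1) * h) =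
      N * PowerSeries.coeff 0 h := by
  simp [PowerSeries.coeff_mul, Finset.Nat.antidiagonal_succ]

lemma PadicInt.p_dvd_coeff_mk_choose_sub_one_mul {N : ℤ_[p]} (hN : (p : ℤ_[p]) ∣ N)
    {h : PowerSeries ℤ_[p]} (hh : N * PowerSeries.coeff 0 h = 0) {k : ℕ} (hk : k ≤ p) :
    (p : ℤ_[p]) ∣ PowerSeries.coeff k ((PowerSeries.mk (Ring.choose N) - 1) * h) := by
  rw [PowerSeries.coeff_mul]
  refine Finset.dvd_sum fun ⟨i, j⟩ hij => ?_
  rw [Finset.HasAntidiagonal.mem_antidiagonal] at hij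
  rcases Nat.eq_zero_or_pos i with rfl | hi
  · simp
  rw [map_sub, PowerSeries.coeff_mk, PowerSeries.coeff_one, if_neg hi.ne', sub_zero]
  rcases (show i < p ∨ i = p by omega) with hip | rfl
  · exact (PadicInt.p_dvd_choose_of_p_dvd p hN hi.ne' hip).mul_right _
  obtain rfl : j = 0 := by omega
  rcases mul_eq_zero.mp hh with rfl | hh
  · simp [Ring.choose_zero_pos _ hi]
  · simp [hh]

/-- Let `p` be a prime, `N ∈ pℤ_p`, and let `φ ∈ (X,Y)²·ℤ_p[[X,Y]]` be
divisible in `ℤ_p[[X,Y]]` by `(1+X)^N - (1+Y)`.  Then `φ(X,0) ≡ 0` modulo the ideal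
`(p, X^(p+1))` of `ℤ_p[[X]]`. -/
theorem statement9 (N : ℤ_[p]) (hN : (p : ℤ_[p]) ∣ N)
    (φ : MvPowerSeries (Fin 2) ℤ_[p])
    (hmem : φ ∈ (Ideal.span {(MvPowerSeries.X 0 : MvPowerSeries (Fin 2) ℤ_[p]),
      MvPowerSeries.X 1}) ^ 2)
    (hdvd : (binomSer p 0 N - (1 + MvPowerSeries.X 1)) ∣ φ) :
    specX φ ∈ Ideal.span {((p : ℕ) : PowerSeries ℤ_[p]), PowerSeries.X ^ (p + 1)} := by
  obtain ⟨ψ, rfl⟩ := hdvd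
  have hspec : specX ((binomSer p 0 N - (1 + MvPowerSeries.X 1)) * ψ)
      = (PowerSeries.mk (Ring.choose N) - 1) * specX ψ := by
    rw [← specXRingHom_apply, map_mul, map_sub, map_add, map_one, specXRingHom_apply,
      specXRingHom_apply, specXRingHom_apply, specX_binomSer_zero, specX_X_one, add_zero]
  have hψ₀ : N * PowerSeries.coeff 0 (specX ψ) = 0 := by
    rw [← PowerSeries.coeff_one_mk_choose_sub_one_mul, ← hspec]
    exact PowerSeries.X_pow_dvd_iff.mp (specX_X_pow_two_dvd hmem) 1 (by norm_num)
  rw [← map_natCast PowerSeries.C, hspec]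
  exact PowerSeries.mem_span_C_X_pow_of_dvd_coeff _ _ _ fun k hk =>
    PadicInt.p_dvd_coeff_mk_choose_sub_one_mul p hN hψ₀ hk
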